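/- arXiv:1209.3233 — 4 statements merged into one kernel-verified Lean document; each statement's English description precedes it below -/
import Mathlib

section
/- For any real α > 1 and positive integers a_1, …, a_k, the number of lattice points (i_1, …, i_k) ∈ ℕ^k satisfying a_1 i_1^α + ⋯ + a_k i_k^α < n < a_1(i_1+1)^α + ⋯ + a_k(i_k+1)^α is O(n^{(k-1)/α}), where the implied constant depends only on α, k, a_1, …, a_k. -/
/-!
Walk from the corner `i` of the unit cube to the opposite corner `i + 1` by raising the
coordinates one at a time. The weighted power sum increases along this staircase, so a cube that
straddles the level `n` has a step `J` at which the staircase crosses `n`. A cube is determined by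
its crossing step together with its other coordinates: two cubes that agree off `J` but differ at
`J` have staircases ordered at step `J`, so they cannot both cross there. Every coordinate of a
straddling cube is at most `n ^ (1 / α)`, so there are at most `k (n ^ (1 / α) + 1) ^ (k - 1)` of
them.
-/

open Real Set

theorem exists_lt_le_succ {β : Type*} [LinearOrder β] (g : ℕ → β) {x : β} {k : ℕ}
    (h0 : g 0 < x) (hk : x ≤ g k) : ∃ t < k, g t < x ∧ x ≤ g (t + 1) := by
  induction k with
  | zero => exact absurd hk (not_le.2 h0)
  | succ k ih =>
    by_cases hlt : g k < x
    · exact ⟨k, k.lt_succ_self, hlt, hk⟩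
    · obtain ⟨t, ht, h⟩ := ih (not_lt.1 hlt)
      exact ⟨t, ht.trans k.lt_succ_self, h⟩

section Staircase

variable {k : ℕ}

def stairStep (i : Fin k → ℕ) (t : ℕ) : Fin k → ℕ :=
  fun m => i m + if (m : ℕ) < t then 1 else 0

@[simp]
lemma stairStep_zero (i : Fin k → ℕ) : stairStep i 0 = i := by
  funext m
  simp [stairStep]

lemma stairStep_of_le (i : Fin k → ℕ) {t : ℕ} (ht : k ≤ t) : stairStep i t = i + 1 := by
  funext m
  simp [stairStep, m.isLt.trans_le ht]

lemma stairStep_succ_le {i i' : Fin k → ℕ} {J : Fin k} (hoff : ∀ m ≠ J, i m = i' m)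
    (hlt : i J < i' J) : stairStep i (J + 1) ≤ stairStep i' J := by
  intro m
  rcases eq_or_ne m J with rfl | hm
  · simp only [stairStep, lt_add_one, if_true, lt_irrefl, if_false]
    omega
  · have hmJ : (m : ℕ) ≠ J := Fin.val_ne_of_ne hm
    simp only [stairStep, hoff m hm]
    split_ifs <;> omega

variable (f : (Fin k → ℕ) → ℝ) (x : ℝ)

def IsStairCrossing (i : Fin k → ℕ) (J : Fin k) : Prop :=
  f (stairStep i J) < x ∧ x ≤ f (stairStep i (J + 1))

lemma exists_isStairCrossing {i : Fin k → ℕ} (h0 : f i < x) (h1 : x ≤ f (i + 1)) :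
    ∃ J, IsStairCrossing f x i J := by
  obtain ⟨t, ht, h⟩ := exists_lt_le_succ (fun t => f (stairStep i t)) (k := k)
    (by simpa using h0) (by rwa [stairStep_of_le i le_rfl])
  exact ⟨⟨t, ht⟩, h⟩

variable {f x}

lemma eq_of_isStairCrossing (hf : Monotone f) {i i' : Fin k → ℕ} {J : Fin k}
    (hi : IsStairCrossing f x i J) (hi' : IsStairCrossing f x i' J)
    (hoff : ∀ m ≠ J, i m = i' m) : i = i' := by
  have not_lt_of_crossing : ∀ {i i'}, IsStairCrossing f x i J → IsStairCrossing f x i' J →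
      (∀ m ≠ J, i m = i' m) → ¬ i J < i' J := fun hi hi' hoff hlt =>
    (hi.2.trans (hf (stairStep_succ_le hoff hlt))).not_gt hi'.1
  funext m
  rcases eq_or_ne m J with rfl | hm
  · exact le_antisymm (not_lt.1 (not_lt_of_crossing hi' hi fun m hm => (hoff m hm).symm))
      (not_lt.1 (not_lt_of_crossing hi hi' hoff))
  · exact hoff m hm

end Staircase

theorem finite_and_ncard_le_of_monotone {K : ℕ} {f : (Fin (K + 1) → ℕ) → ℝ} (hf : Monotone f)
    {x : ℝ} {M : ℕ} {S : Set (Fin (K + 1) → ℕ)}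
    (hS : ∀ i ∈ S, (∀ m, i m < M) ∧ f i < x ∧ x ≤ f (i + 1)) :
    S.Finite ∧ S.ncard ≤ (K + 1) * M ^ K := by
  choose! J hJ using fun i hi => exists_isStairCrossing f x (hS i hi).2.1 (hS i hi).2.2
  let T : Finset (Fin (K + 1) × (Fin K → ℕ)) :=
    Finset.univ ×ˢ Fintype.piFinset fun _ => Finset.range M
  let Φ : (Fin (K + 1) → ℕ) → Fin (K + 1) × (Fin K → ℕ) :=
    fun i => (J i, fun t => i ((J i).succAbove t))
  have hmaps : MapsTo Φ S T := fun i hi => by simp [T, Φ, (hS i hi).1]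
  have hinj : InjOn Φ S := by
    intro i hi i' hi' h
    obtain ⟨hJeq, hoff⟩ := Prod.ext_iff.1 h
    simp only [Φ] at hJeq hoff
    refine eq_of_isStairCrossing hf (hJ i hi) (hJeq ▸ hJ i' hi') fun m hm => ?_
    obtain ⟨t, rfl⟩ := Fin.exists_succAbove_eq hm
    simpa [hJeq] using congrFun hoff t
  refine ⟨T.finite_toSet.of_injOn hmaps hinj, ?_⟩
  calc S.ncard ≤ (T : Set _).ncard :=
        ncard_le_ncard_of_injOn Φ (fun _ hi => hmaps hi) hinj T.finite_toSet
    _ = (K + 1) * M ^ K := by rw [ncard_coe_finset]; simp [T]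

noncomputable def weightedPowerSum {k : ℕ} (a : Fin k → ℕ) (α : ℝ) (i : Fin k → ℕ) : ℝ :=
  ∑ j, (a j : ℝ) * (i j : ℝ) ^ α

section WeightedPowerSum

variable {k : ℕ} (a : Fin k → ℕ) {α : ℝ}

lemma monotone_weightedPowerSum (hα : 0 ≤ α) : Monotone (weightedPowerSum a α) :=
  fun _ _ h => Finset.sum_le_sum fun j _ =>
    mul_le_mul_of_nonneg_left (rpow_le_rpow (by positivity) (by exact_mod_cast h j) hα)
      (by positivity)

lemma weightedPowerSum_add_one (i : Fin k → ℕ) :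
    weightedPowerSum a α (i + 1) = ∑ j, (a j : ℝ) * ((i j : ℝ) + 1) ^ α := by
  simp [weightedPowerSum]

lemma coord_le_rpow_inv_of_weightedPowerSum_lt (ha : ∀ j, 0 < a j) (hα : 0 < α)
    {i : Fin k → ℕ} {x : ℝ} (h : weightedPowerSum a α i < x) (m : Fin k) :
    (i m : ℝ) ≤ x ^ α⁻¹ := by
  have hterm : (a m : ℝ) * (i m : ℝ) ^ α ≤ weightedPowerSum a α i :=
    Finset.single_le_sum (f := fun j => (a j : ℝ) * (i j : ℝ) ^ α) (fun j _ => by positivity)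
      (Finset.mem_univ m)
  have hx : 0 ≤ x := ((by positivity : (0 : ℝ) ≤ a m * (i m : ℝ) ^ α).trans hterm).trans h.le
  rw [le_rpow_inv_iff_of_pos (by positivity) hx hα]
  calc (i m : ℝ) ^ α ≤ a m * (i m : ℝ) ^ α :=
        le_mul_of_one_le_left (by positivity) (by exact_mod_cast ha m)
    _ ≤ x := hterm.trans h.le

end WeightedPowerSum

/-- For α > 1 and positive integers a_1,…,a_k, the number of lattice points
(i_1,…,i_k) ∈ ℕ^k with a_1 i_1^α + ⋯ + a_k i_k^α < n < a_1(i_1+1)^α + ⋯ + a_k(i_k+1)^α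
is O(n^{(k-1)/α}). -/
theorem stmt0 (α : ℝ) (hα : 1 < α) (k : ℕ) (hk : 1 ≤ k) (a : Fin k → ℕ)
    (ha : ∀ j, 0 < a j) :
    ∃ C > (0:ℝ), ∃ N : ℝ, ∀ n : ℝ, N ≤ n →
      (Set.Finite {i : Fin k → ℕ |
          (∑ j, (a j : ℝ) * (i j : ℝ) ^ α) < n ∧
          n < ∑ j, (a j : ℝ) * ((i j : ℝ) + 1) ^ α}) ∧
      ((Set.ncard {i : Fin k → ℕ |
          (∑ j, (a j : ℝ) * (i j : ℝ) ^ α) < n ∧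
          n < ∑ j, (a j : ℝ) * ((i j : ℝ) + 1) ^ α} : ℝ)
        ≤ C * n ^ (((k : ℝ) - 1) / α)) := by
  obtain ⟨K, rfl⟩ : ∃ K, k = K + 1 := ⟨k - 1, by omega⟩
  have hα0 : 0 < α := zero_lt_one.trans hα
  refine ⟨(K + 1) * 2 ^ K, by positivity, 1, fun n hn => ?_⟩
  have hr : 1 ≤ n ^ α⁻¹ := one_le_rpow hn (by positivity)
  obtain ⟨hfin, hcard⟩ := finite_and_ncard_le_of_monotone (monotone_weightedPowerSum a hα0.le)
    (M := ⌊n ^ α⁻¹⌋₊ + 1) fun i (hi : _ < n ∧ n < _) =>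
      ⟨fun m => Nat.lt_succ_of_le <| Nat.le_floor <|
          coord_le_rpow_inv_of_weightedPowerSum_lt a ha hα0 hi.1 m,
        hi.1, (weightedPowerSum_add_one a i).symm ▸ hi.2.le⟩
  refine ⟨hfin, ?_⟩
  have hM : (⌊n ^ α⁻¹⌋₊ : ℝ) + 1 ≤ 2 * n ^ α⁻¹ := by
    linarith [Nat.floor_le (zero_le_one.trans hr)]
  calc _ ≤ (((K + 1) * (⌊n ^ α⁻¹⌋₊ + 1) ^ K : ℕ) : ℝ) := by exact_mod_cast hcard
    _ ≤ (K + 1) * (2 * n ^ α⁻¹) ^ K := by push_cast; gcongr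
    _ = (K + 1) * 2 ^ K * n ^ ((((K + 1 : ℕ) : ℝ) - 1) / α) := by
      rw [mul_pow, ← rpow_natCast (n ^ α⁻¹), ← rpow_mul (by linarith)]
      push_cast
      ring_nf
end

section
/- Let α > 1, k ≥ 2, and n large. Define I = {(i_1,…,i_k) ∈ ℕ^k : i_1 > i_2 > ⋯ > i_k, i_1^α + ⋯ + i_k^α < n < (i_1+1)^α + ⋯ + (i_k+1)^α}. For t ≥ 0 define X_t = {(i_1,…,i_{k−1}) : ∃ i_k with (i_1,…,i_k) ∈ I, and 4ktα n^{1−1/α} ≤ i_1^α + ⋯ + i_{k−1}^α < (4kt+2k)α n^{1−1/α}}, and for a tuple (i_1,…,i_{k−1}) let I_{i_1,…,i_{k−1}} = {i_k : (i_1,…,i_{k−1},i_k) ∈ I}. Then for s ≠ t, (i_1,…,i_{k−1}) ∈ X_s, and (j_1,…,j_{k−1}) ∈ X_t, the sets I_{i_1,…,i_{k−1}} and I_{j_1,…,j_{k−1}} are disjoint. -/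
open Real Finset Filter

/-- `(i, u)` corresponds to a member `(i_1,…,i_{k-1},i_k=u)` of
`I = {i_1 > ⋯ > i_k, i_1^α + ⋯ + i_k^α < n < (i_1+1)^α + ⋯ + (i_k+1)^α}`. -/
def memI (α n : ℝ) {k : ℕ} (i : Fin (k - 1) → ℕ) (u : ℕ) : Prop :=
  StrictAnti i ∧ (∀ r, u < i r) ∧
    (∑ r, (i r : ℝ) ^ α) + (u : ℝ) ^ α < n ∧
    n < (∑ r, ((i r : ℝ) + 1) ^ α) + ((u : ℝ) + 1) ^ α

/-- `i ∈ X_t`. -/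
def memX (α n : ℝ) {k : ℕ} (t : ℕ) (i : Fin (k - 1) → ℕ) : Prop :=
  (∃ u, memI α n i u) ∧
    4 * k * t * α * n ^ (1 - 1 / α) ≤ ∑ r, (i r : ℝ) ^ α ∧
    (∑ r, (i r : ℝ) ^ α) < (4 * k * t + 2 * k) * α * n ^ (1 - 1 / α)

/-!
If `u` lies in both fibres, then `∑ j^α + u^α < n < ∑ (i+1)^α + (u+1)^α`. All coordinates are
below `n^(1/α)`, and for such `x` the increment `(x+1)^α - x^α ≤ α (x+1)^(α-1)` is at most
`2α n^(1-1/α)` once `n` is large; summing over the `k` coordinates gives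
`∑ j^α < ∑ i^α + 2kα n^(1-1/α)`. The bands defining `X_s` and `X_t` for `s < t` are separated by a
gap of width at least `2kα n^(1-1/α)`, so this is impossible.
-/

theorem rpow_add_one_le {α x : ℝ} (hα : 1 ≤ α) (hx : 0 ≤ x) :
    (x + 1) ^ α ≤ x ^ α + α * (x + 1) ^ (α - 1) := by
  have hx1 : 0 < x + 1 := by linarith
  have hpos : 0 < (x + 1) ^ α := rpow_pos_of_pos hx1 α
  -- Bernoulli's inequality at `s = -1/(x+1)`, multiplied through by `(x+1)^α`
  have hbern := one_add_mul_self_le_rpow_one_add (s := -(x + 1)⁻¹)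
    (neg_le_neg (inv_le_one_of_one_le₀ (by linarith))) hα
  have hbase : 1 + -(x + 1)⁻¹ = x / (x + 1) := by field_simp; ring
  rw [hbase, div_rpow hx hx1.le, le_div_iff₀ hpos] at hbern
  rw [rpow_sub hx1, rpow_one]
  calc (x + 1) ^ α = (1 + α * -(x + 1)⁻¹) * (x + 1) ^ α + α * ((x + 1) ^ α / (x + 1)) := by
        field_simp; ring
    _ ≤ x ^ α + α * ((x + 1) ^ α / (x + 1)) := by gcongr

theorem eventually_rpow_add_one_le {α : ℝ} (hα : 1 < α) :
    ∀ᶠ n : ℝ in atTop, ∀ x : ℝ, 0 ≤ x → x ^ α < n →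
      (x + 1) ^ α ≤ x ^ α + 2 * α * n ^ (1 - 1 / α) := by
  have hα0 : 0 < α := by linarith
  -- `c` is chosen so that `(c m) ^ (α - 1) = 2 m ^ (α - 1)`, where `m = n ^ (1/α)`
  set c : ℝ := 2 ^ (α - 1)⁻¹
  have hc : 1 < c := one_lt_rpow (by norm_num) (inv_pos.2 (by linarith))
  have hc_rpow : c ^ (α - 1) = 2 := rpow_inv_rpow (by norm_num) (by linarith)
  filter_upwards [eventually_gt_atTop 0,
    (tendsto_rpow_atTop (one_div_pos.2 hα0)).eventually_ge_atTop (c - 1)⁻¹]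
    with n hn hm x hx hxn
  have hxm : x < n ^ (1 / α) := by
    rw [one_div]; exact (lt_rpow_inv_iff_of_pos hx hn.le hα0).2 hxn
  have hx1 : x + 1 ≤ c * n ^ (1 / α) := by
    have := (inv_le_iff_one_le_mul₀' (by linarith)).1 hm
    linarith
  calc (x + 1) ^ α ≤ x ^ α + α * (x + 1) ^ (α - 1) := rpow_add_one_le hα.le hx
    _ ≤ x ^ α + α * (c * n ^ (1 / α)) ^ (α - 1) := by gcongr
    _ = x ^ α + 2 * α * n ^ (1 - 1 / α) := by
        rw [mul_rpow (by linarith) (by positivity), hc_rpow, ← rpow_mul hn.le]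
        field_simp

theorem sum_rpow_lt_of_memI {α n δ : ℝ} {k : ℕ} (hk : 1 ≤ k)
    (hδ : ∀ x : ℝ, 0 ≤ x → x ^ α < n → (x + 1) ^ α ≤ x ^ α + δ)
    {i j : Fin (k - 1) → ℕ} {u : ℕ} (hi : memI α n i u) (hj : memI α n j u) :
    ∑ r, (j r : ℝ) ^ α < ∑ r, (i r : ℝ) ^ α + k * δ := by
  obtain ⟨-, -, hi_lt, hi_gt⟩ := hi
  obtain ⟨-, -, hj_lt, -⟩ := hj
  have hnn : ∀ y : ℕ, 0 ≤ (y : ℝ) ^ α := fun y => rpow_nonneg y.cast_nonneg α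
  have hu : (u : ℝ) ^ α < n := by
    linarith [sum_nonneg fun r (_ : r ∈ univ) => hnn (i r)]
  have hir (r : Fin (k - 1)) : (i r : ℝ) ^ α < n := by
    linarith [single_le_sum (fun r _ => hnn (i r)) (mem_univ r), hnn u]
  have hsum : ∑ r, ((i r : ℝ) + 1) ^ α ≤ ∑ r, (i r : ℝ) ^ α + (k - 1 : ℕ) * δ := by
    simpa [sum_add_distrib] using
      sum_le_sum fun r (_ : r ∈ univ) => hδ _ (Nat.cast_nonneg _) (hir r)
  rw [Nat.cast_sub hk, Nat.cast_one] at hsum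
  linarith [hδ u (Nat.cast_nonneg _) hu]

theorem memX.sum_rpow_add_lt {α n : ℝ} {k s t : ℕ} {i j : Fin (k - 1) → ℕ}
    (hα : 0 ≤ α) (hn : 0 ≤ n) (hi : memX α n s i) (hj : memX α n t j) (hst : s < t) :
    ∑ r, (i r : ℝ) ^ α + k * (2 * α * n ^ (1 - 1 / α)) < ∑ r, (j r : ℝ) ^ α := by
  obtain ⟨-, -, hi⟩ := hi
  obtain ⟨-, hj, -⟩ := hj
  have hA : 0 ≤ α * n ^ (1 - 1 / α) := mul_nonneg hα (rpow_nonneg hn _)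
  have hst' : (s : ℝ) + 1 ≤ t := by exact_mod_cast hst
  nlinarith [mul_nonneg (mul_nonneg k.cast_nonneg (sub_nonneg.2 hst')) hA]

/-- For s ≠ t, members of X_s and X_t have disjoint fiber sets I_{i_1,…,i_{k-1}}. -/
theorem stmt5 (α : ℝ) (hα : 1 < α) (k : ℕ) (hk : 2 ≤ k) :
    ∃ N : ℝ, ∀ n : ℝ, N ≤ n → ∀ s t : ℕ, s ≠ t →
      ∀ i j : Fin (k - 1) → ℕ, memX α n s i → memX α n t j →
        Disjoint {u : ℕ | memI α n i u} {u : ℕ | memI α n j u} := by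
  obtain ⟨N, hN⟩ :=
    eventually_atTop.1 ((eventually_gt_atTop 0).and (eventually_rpow_add_one_le hα))
  refine ⟨N, fun n hn s t hst i j hi hj => Set.disjoint_left.2 fun u hui huj => ?_⟩
  obtain ⟨hn0, hδ⟩ := hN n hn
  have hk1 : 1 ≤ k := by omega
  have hα0 : 0 ≤ α := by linarith
  rcases hst.lt_or_gt with hlt | hlt
  · linarith [sum_rpow_lt_of_memI hk1 hδ hui huj, hi.sum_rpow_add_lt hα0 hn0.le hj hlt]
  · linarith [sum_rpow_lt_of_memI hk1 hδ huj hui, hj.sum_rpow_add_lt hα0 hn0.le hi hlt]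
end

section
/- Let α > 1, k ≥ 3, d = ⌊2k²α⌋ + k, and n large. Define I and X_t as above, and for integers s_1,…,s_{k−2} let Y_{s_1,…,s_{k−2}} = {(i_1,…,i_{k−1}) : (i_1,…,i_{k−1}) lies in the projection of I and i_1 + d·i_v = s_{v−1} for each 2 ≤ v ≤ k−1}. Then |Y_{s_1,…,s_{k−2}} ∩ X_t| ≤ 1 for every choice of s_1,…,s_{k−2} and t. -/
/-!
If `i ≠ j` both lie in `Y_s ∩ X_t`, say `i₁ < j₁`, the linear relations `i₁ + d iᵥ = j₁ + d jᵥ`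
force `j₁ = i₁ + d q` and `iᵥ = jᵥ + q` for some `q ≥ 1`. By convexity of `x ↦ x ^ α`, raising the
first coordinate gains at least `d q α i₁ ^ (α - 1)` in the power sum while each of the other
`k - 2` coordinates loses at most `q α i₁ ^ (α - 1)`. Since `n < k (i₁ + 1) ^ α`, for large `n`
we have `n ^ (1 - 1/α) ≤ k α i₁ ^ (α - 1)`, so with `d = ⌊2k²α⌋ + k` the power sums of `i` and `j`
differ by at least `2kα n ^ (1 - 1/α)`, the width of the window defining `X_t`.
-/

open Real Finset Filter Topology

/-- `i ∈ Y_{s_1,…,s_{k-2}}` where `d = ⌊2k²α⌋ + k`:  `i` is in the projection of `I`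
and `i_1 + d·i_v = s_{v-1}` for `2 ≤ v ≤ k-1`. -/
def memY (α n : ℝ) {k : ℕ} (s : Fin (k - 1) → ℕ) (i : Fin (k - 1) → ℕ) : Prop :=
  (∃ u, memI α n i u) ∧
    ∀ v0 v : Fin (k - 1), (v0 : ℕ) = 0 → 1 ≤ (v : ℕ) →
      i v0 + (Nat.floor (2 * (k : ℝ) ^ 2 * α) + k) * i v = s v

lemma rpow_add_mul_rpow_sub_one_mul_sub_le {α : ℝ} (hα : 1 ≤ α) {a b : ℝ} (ha : 0 < a)
    (hb : 0 ≤ b) :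
    a ^ α + α * a ^ (α - 1) * (b - a) ≤ b ^ α := by
  have hba : -1 ≤ b / a - 1 := by linarith [div_nonneg hb ha.le]
  have h := one_add_mul_self_le_rpow_one_add hba hα
  rw [add_sub_cancel, div_rpow hb ha.le, le_div_iff₀ (rpow_pos_of_pos ha α)] at h
  calc a ^ α + α * a ^ (α - 1) * (b - a) = (1 + α * (b / a - 1)) * a ^ α := by
        rw [rpow_sub_one ha.ne']; field_simp
    _ ≤ b ^ α := h

lemma eventually_add_one_rpow_le_mul_rpow (p : ℝ) {c : ℝ} (hc : 1 < c) :
    ∀ᶠ x : ℝ in atTop, (x + 1) ^ p ≤ c * x ^ p := by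
  have hcont : ContinuousAt (fun y : ℝ => (1 + y) ^ p) 0 :=
    (continuousAt_const.add continuousAt_id).rpow_const (Or.inl (by norm_num))
  have hlim : Tendsto (fun x : ℝ => (1 + x⁻¹) ^ p) atTop (𝓝 1) := by
    simpa [Function.comp_def] using hcont.tendsto.comp tendsto_inv_atTop_zero
  filter_upwards [hlim.eventually (gt_mem_nhds hc), eventually_gt_atTop 0] with x hx hx0
  calc (x + 1) ^ p = (1 + x⁻¹) ^ p * x ^ p := by
        rw [← mul_rpow (by positivity) hx0.le]; field_simp
    _ ≤ c * x ^ p := by gcongr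

lemma exists_rpow_one_sub_inv_le_of_lt_mul_add_one_rpow {α k : ℝ} (hα : 1 < α) (hk : 1 ≤ k) :
    ∃ N : ℝ, ∀ n, N ≤ n → ∀ m : ℕ, n < k * ((m : ℝ) + 1) ^ α →
      n ^ (1 - 1 / α) ≤ k * α * (m : ℝ) ^ (α - 1) := by
  have hα0 : 0 < α := by linarith
  have hk0 : 0 < k := by linarith
  -- the slack `α k ^ (1/α) > 1` absorbs the passage from `(m + 1) ^ (α - 1)` to `m ^ (α - 1)`
  have hc : 1 < α * k ^ (1 / α) :=
    one_lt_mul_of_lt_of_le hα (one_le_rpow hk (by positivity))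
  obtain ⟨M, hM⟩ := eventually_atTop.1 <|
    tendsto_natCast_atTop_atTop.eventually (eventually_add_one_rpow_le_mul_rpow (α - 1) hc)
  refine ⟨k * ((M : ℝ) + 1) ^ α, fun n hn m hm => ?_⟩
  have hMm : M ≤ m := by
    have h : ((M : ℝ) + 1) ^ α < ((m : ℝ) + 1) ^ α :=
      lt_of_mul_lt_mul_left (hn.trans_lt hm) hk0.le
    rw [rpow_lt_rpow_iff (by positivity) (by positivity) hα0] at h
    exact_mod_cast (add_lt_add_iff_right 1).1 h |>.le
  calc n ^ (1 - 1 / α) ≤ (k * ((m : ℝ) + 1) ^ α) ^ (1 - 1 / α) :=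
        rpow_le_rpow (hn.trans' (by positivity)) hm.le
          (sub_nonneg.2 (div_le_one_of_le₀ hα.le hα0.le))
    _ = k ^ (1 - 1 / α) * ((m : ℝ) + 1) ^ (α - 1) := by
        rw [mul_rpow hk0.le (by positivity), ← rpow_mul (by positivity)]
        congr 2; field_simp
    _ ≤ k ^ (1 - 1 / α) * (α * k ^ (1 / α) * (m : ℝ) ^ (α - 1)) := by gcongr; exact hM m hMm
    _ = k * α * (m : ℝ) ^ (α - 1) := by
        have hkk : k ^ (1 - 1 / α) * k ^ (1 / α) = k := by
          rw [← rpow_add hk0, sub_add_cancel, rpow_one]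
        linear_combination (α * (m : ℝ) ^ (α - 1)) * hkk

lemma mul_rpow_sub_one_mul_le_sum_rpow_sub_sum_rpow {ι : Type*} [Fintype ι] [DecidableEq ι]
    {α : ℝ} (hα : 1 ≤ α) {a b : ι → ℝ} {i₀ : ι} {D q : ℝ} (hq : 0 ≤ q)
    (ha : ∀ i, 0 < a i) (hb : ∀ i, 0 ≤ b i) (hmax : ∀ i, a i ≤ a i₀)
    (h₀ : b i₀ = a i₀ + D * q) (hne : ∀ i ≠ i₀, a i = b i + q) :
    α * a i₀ ^ (α - 1) * q * (D - (Fintype.card ι - 1)) ≤ ∑ i, b i ^ α - ∑ i, a i ^ α := by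
  set P := α * a i₀ ^ (α - 1)
  have hgain : P * (D * q) ≤ b i₀ ^ α - a i₀ ^ α := by
    have := rpow_add_mul_rpow_sub_one_mul_sub_le hα (ha i₀) (hb i₀)
    rw [h₀, add_sub_cancel_left] at this
    rw [h₀]
    linarith
  have hloss : ∀ i ∈ univ.erase i₀, -(P * q) ≤ b i ^ α - a i ^ α := by
    intro i hi
    have h := rpow_add_mul_rpow_sub_one_mul_sub_le hα (ha i) (hb i)
    have hle : α * a i ^ (α - 1) * q ≤ P * q := mul_le_mul_of_nonneg_right
      (mul_le_mul_of_nonneg_left (rpow_le_rpow (ha i).le (hmax i) (by linarith)) (by linarith)) hq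
    rw [hne i (ne_of_mem_erase hi)] at h hle ⊢
    linarith
  have hcard : ((univ.erase i₀).card : ℝ) = Fintype.card ι - 1 := by
    rw [card_erase_of_mem (mem_univ i₀), card_univ, Nat.cast_pred (Fintype.card_pos_iff.2 ⟨i₀⟩)]
  have hsum := card_nsmul_le_sum _ _ _ hloss
  rw [nsmul_eq_mul, hcard] at hsum
  rw [← sum_sub_distrib, ← add_sum_erase _ _ (mem_univ i₀)]
  linarith

lemma exists_shift_of_add_mul_eq_add_mul {ι : Type*} {D : ℕ} (hD : 0 < D) {a b : ι → ℕ}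
    {i₀ i₁ : ι} (h₁ : i₁ ≠ i₀) (h : ∀ i ≠ i₀, a i₀ + D * a i = b i₀ + D * b i)
    (hlt : a i₀ < b i₀) :
    ∃ q, 0 < q ∧ b i₀ = a i₀ + D * q ∧ ∀ i ≠ i₀, a i = b i + q := by
  have hba : ∀ i ≠ i₀, D * b i < D * a i := fun i hi => by have := h i hi; omega
  have hq := lt_of_mul_lt_mul_left (hba i₁ h₁) D.zero_le
  refine ⟨a i₁ - b i₁, Nat.sub_pos_of_lt hq, ?_, fun i hi => Nat.eq_of_mul_eq_mul_left hD ?_⟩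
  · have := h i₁ h₁
    rw [Nat.mul_sub]
    omega
  · have := h i hi
    have := h i₁ h₁
    have := hba i₁ h₁
    rw [Nat.mul_add, Nat.mul_sub]
    omega

section

variable {α n : ℝ} {k : ℕ} {v₀ : Fin (k - 1)}

lemma memI.le_apply_of_val_eq_zero {i : Fin (k - 1) → ℕ} {u : ℕ} (h : memI α n i u)
    (hv₀ : (v₀ : ℕ) = 0) (r : Fin (k - 1)) :
    i r ≤ i v₀ :=
  h.1.antitone (Fin.le_def.2 (by omega))

lemma memI.lt_mul_add_one_rpow {i : Fin (k - 1) → ℕ} {u : ℕ} (h : memI α n i u)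
    (hα : 0 < α) (hv₀ : (v₀ : ℕ) = 0) :
    n < k * ((i v₀ : ℝ) + 1) ^ α := by
  have hk : ((k - 1 : ℕ) : ℝ) + 1 = k := by
    rw [Nat.cast_pred (by have := v₀.pos; omega), sub_add_cancel]
  calc n < (∑ r, ((i r : ℝ) + 1) ^ α) + ((u : ℝ) + 1) ^ α := h.2.2.2
    _ ≤ (∑ _r : Fin (k - 1), ((i v₀ : ℝ) + 1) ^ α) + ((i v₀ : ℝ) + 1) ^ α := by
        gcongr with r
        · exact_mod_cast h.le_apply_of_val_eq_zero hv₀ r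
        · exact_mod_cast (h.2.1 v₀).le
    _ = k * ((i v₀ : ℝ) + 1) ^ α := by
        rw [sum_const, card_univ, Fintype.card_fin, nsmul_eq_mul, ← hk]
        ring

lemma eq_of_memY_of_apply_eq {s i j : Fin (k - 1) → ℕ} (hi : memY α n s i) (hj : memY α n s j)
    (hv₀ : (v₀ : ℕ) = 0) (h₀ : i v₀ = j v₀) : i = j := by
  funext r
  by_cases hr : (r : ℕ) = 0
  · rwa [show r = v₀ from Fin.ext (hr.trans hv₀.symm)]
  · have hD : 0 < ⌊2 * (k : ℝ) ^ 2 * α⌋₊ + k := by have := v₀.pos; omega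
    have hi := hi.2 v₀ r hv₀ (by omega)
    have hj := hj.2 v₀ r hv₀ (by omega)
    exact Nat.eq_of_mul_eq_mul_left hD (by omega)

lemma apply_not_lt_of_memY_of_memX (hα : 1 < α) (hk : 3 ≤ k)
    (hn : ∀ m : ℕ, n < k * ((m : ℝ) + 1) ^ α → n ^ (1 - 1 / α) ≤ k * α * (m : ℝ) ^ (α - 1))
    {s : Fin (k - 1) → ℕ} {t : ℕ} {a b : Fin (k - 1) → ℕ} (hYa : memY α n s a) (hXa : memX α n t a)
    (hYb : memY α n s b) (hXb : memX α n t b) (hv₀ : (v₀ : ℕ) = 0) : ¬ a v₀ < b v₀ := by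
  intro hlt
  set D := ⌊2 * (k : ℝ) ^ 2 * α⌋₊ + k
  obtain ⟨u, hIa⟩ := hYa.1
  have hv : ∀ v : Fin (k - 1), v ≠ v₀ → 1 ≤ (v : ℕ) := fun v hv =>
    Nat.one_le_iff_ne_zero.2 fun h => hv (Fin.ext (h.trans hv₀.symm))
  obtain ⟨q, hq, hb₀, hab⟩ := exists_shift_of_add_mul_eq_add_mul (D := D) (by omega)
    (i₁ := ⟨1, by omega⟩) (Fin.ne_of_val_ne (by simp [hv₀]))
    (fun v hv' => (hYa.2 v₀ v hv₀ (hv v hv')).trans (hYb.2 v₀ v hv₀ (hv v hv')).symm) hlt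
  have hgain := mul_rpow_sub_one_mul_le_sum_rpow_sub_sum_rpow hα.le (q := q) (Nat.cast_nonneg q)
    (a := fun r => (a r : ℝ)) (b := fun r => (b r : ℝ)) (i₀ := v₀) (D := D)
    (fun r => by exact_mod_cast (u.zero_le.trans_lt (hIa.2.1 r)))
    (fun r => Nat.cast_nonneg _) (fun r => by exact_mod_cast hIa.le_apply_of_val_eq_zero hv₀ r)
    (by exact_mod_cast hb₀) (fun r hr => by exact_mod_cast hab r hr)
  have hnA := hn (a v₀) (hIa.lt_mul_add_one_rpow (by linarith) hv₀)
  have hD : 2 * (k : ℝ) ^ 2 * α ≤ q * (D - (Fintype.card (Fin (k - 1)) - 1)) := by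
    have hfloor := Nat.lt_floor_add_one (2 * (k : ℝ) ^ 2 * α)
    have hq1 : (1 : ℝ) ≤ q := by exact_mod_cast hq
    rw [Fintype.card_fin, Nat.cast_sub (by omega)]
    push_cast [D]
    nlinarith
  have hwindow : (∑ r, (b r : ℝ) ^ α) - ∑ r, (a r : ℝ) ^ α < 2 * k * α * n ^ (1 - 1 / α) := by
    linarith [hXa.2.1, hXb.2.2]
  have hgap : 2 * k * α * n ^ (1 - 1 / α) ≤ (∑ r, (b r : ℝ) ^ α) - ∑ r, (a r : ℝ) ^ α :=
    calc 2 * k * α * n ^ (1 - 1 / α) ≤ 2 * k * α * (k * α * (a v₀ : ℝ) ^ (α - 1)) := by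
          gcongr
      _ = α * (a v₀ : ℝ) ^ (α - 1) * (2 * (k : ℝ) ^ 2 * α) := by ring
      _ ≤ α * (a v₀ : ℝ) ^ (α - 1) * (q * (D - (Fintype.card (Fin (k - 1)) - 1))) := by
          gcongr
      _ ≤ _ := by rw [← mul_assoc]; exact hgain
  linarith

end

/-- `|Y_{s_1,…,s_{k-2}} ∩ X_t| ≤ 1`. -/
theorem stmt6 (α : ℝ) (hα : 1 < α) (k : ℕ) (hk : 3 ≤ k) :
    ∃ N : ℝ, ∀ n : ℝ, N ≤ n → ∀ (s : Fin (k - 1) → ℕ) (t : ℕ),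
      ∀ i j : Fin (k - 1) → ℕ,
        memY α n s i → memX α n t i → memY α n s j → memX α n t j → i = j := by
  obtain ⟨N, hN⟩ := exists_rpow_one_sub_inv_le_of_lt_mul_add_one_rpow hα
    (k := (k : ℝ)) (by exact_mod_cast (by omega : 1 ≤ k))
  refine ⟨N, fun n hn s t i j hYi hXi hYj hXj => ?_⟩
  have hv₀ : ((⟨0, by omega⟩ : Fin (k - 1)) : ℕ) = 0 := rfl
  exact eq_of_memY_of_apply_eq hYi hYj hv₀ <| le_antisymm
    (not_lt.1 (apply_not_lt_of_memY_of_memX hα hk (hN n hn) hYj hXj hYi hXi hv₀))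
    (not_lt.1 (apply_not_lt_of_memY_of_memX hα hk (hN n hn) hYi hXi hYj hXj hv₀))
end

section
/- Let α > 1, k ≥ 2, and let (i_1,…,i_{k−1}) ∈ ℕ^{k−1} with (i_1+1)^α + ⋯ + (i_{k−1}+1)^α < n − n^{(α−1)/α}. Then the number of non-negative integers i_k with i_1^α + ⋯ + i_{k−1}^α + i_k^α < n < (i_1+1)^α + ⋯ + (i_{k−1}+1)^α + (i_k+1)^α is O( ((i_1+1)^{α−1} + ⋯ + (i_{k−1}+1)^{α−1}) / (n − (i_1+1)^α − ⋯ − (i_{k−1}+1)^α)^{1−1/α} + 1 ). -/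
/-!
Write `S = ∑ i_r ^ α` and `T = ∑ (i_r + 1) ^ α`. The admissible `u` are naturals with
`(n - T) ^ (1/α) < u + 1` and `u < (n - S) ^ (1/α)`, so there are at most
`(n - S) ^ (1/α) - (n - T) ^ (1/α) + 2` of them. The tangent-line bound for the concave map
`t ↦ t ^ (1/α)` at `n - T` bounds this gap by `(T - S) / (α (n - T) ^ (1 - 1/α))`, and the
tangent-line bound for the convex map `t ↦ t ^ α` gives `T - S ≤ α ∑ (i_r + 1) ^ (α - 1)`;
both are Bernoulli's inequality. The hypothesis forces `n > T`: for `n < 0` the real power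
`n ^ ((α - 1)/α)` is only bounded by `|n| ^ ((α - 1)/α)`, which is too small once `T ≥ 1`.
-/

open Real Finset

namespace Real

lemma rpow_sub_rpow_le_mul_of_one_le {x y p : ℝ} (hx : 0 ≤ x) (hxy : x ≤ y) (hp : 1 ≤ p) :
    y ^ p - x ^ p ≤ p * y ^ (p - 1) * (y - x) := by
  rcases hxy.eq_or_lt with rfl | hxy
  · simp
  have hy : 0 < y := hx.trans_lt hxy
  have hbern := one_add_mul_self_le_rpow_one_add (s := x / y - 1)
    (by linarith [div_nonneg hx hy.le]) hp
  rw [add_sub_cancel, div_rpow hx hy.le, le_div_iff₀ (rpow_pos_of_pos hy p)] at hbern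
  have hyp : y ^ p = y ^ (p - 1) * y := by rw [← rpow_add_one hy.ne']; ring_nf
  rw [hyp] at hbern ⊢
  field_simp at hbern
  nlinarith

lemma rpow_sub_rpow_le_mul_of_le_one {x y p : ℝ} (hx : 0 < x) (hy : 0 ≤ y) (hp₀ : 0 ≤ p)
    (hp₁ : p ≤ 1) : y ^ p - x ^ p ≤ p * x ^ (p - 1) * (y - x) := by
  have hbern := rpow_one_add_le_one_add_mul_self (s := y / x - 1)
    (by linarith [div_nonneg hy hx.le]) hp₀ hp₁
  rw [add_sub_cancel, div_rpow hy hx.le, div_le_iff₀ (rpow_pos_of_pos hx p)] at hbern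
  have hxp : x ^ p = x ^ (p - 1) * x := by rw [← rpow_add_one hx.ne']; ring_nf
  rw [hxp] at hbern ⊢
  field_simp at hbern
  nlinarith

lemma sub_rpow_lt_one_of_neg {x e : ℝ} (hx : x < 0) (he₀ : 0 ≤ e) (he₁ : e ≤ 1) :
    x - x ^ e < 1 := by
  have hbern := rpow_one_add_le_one_add_mul_self (s := |x| - 1)
    (by linarith [abs_nonneg x]) he₀ he₁
  rw [add_sub_cancel] at hbern
  have habs : -x ^ e ≤ |x| ^ e := (neg_le_abs _).trans (abs_rpow_le_abs_rpow x e)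
  rw [abs_of_neg hx] at hbern habs
  rcases he₀.eq_or_lt with rfl | he₀
  · rw [rpow_zero]; linarith
  · nlinarith [mul_nonneg (sub_nonneg.mpr he₁) (neg_nonneg.mpr hx.le)]

end Real

lemma ncard_le_sub_add_two_of_forall_mem {s : Set ℕ} {A B : ℝ} (hA : 0 ≤ A) (hAB : A ≤ B)
    (hs : ∀ u ∈ s, A < u + 1 ∧ (u : ℝ) < B) : (s.ncard : ℝ) ≤ B - A + 2 := by
  have hsub : s ⊆ ↑(Finset.Ico ⌊A⌋₊ ⌈B⌉₊) := by
    intro u hu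
    rw [coe_Ico, Set.mem_Ico, ← Nat.lt_succ_iff, Nat.floor_lt' u.succ_ne_zero, Nat.lt_ceil]
    exact ⟨mod_cast (hs u hu).1, (hs u hu).2⟩
  have hcard := (Set.ncard_le_ncard hsub (Finset.finite_toSet _)).trans_eq
    ((Set.ncard_coe_finset _).trans (Nat.card_Ico _ _))
  refine (Nat.cast_le.mpr hcard).trans ?_
  rcases le_total ⌊A⌋₊ ⌈B⌉₊ with h | h
  · rw [Nat.cast_sub h]
    linarith [Nat.ceil_lt_add_one (hA.trans hAB), Nat.sub_one_lt_floor A]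
  · rw [Nat.sub_eq_zero_of_le h, Nat.cast_zero]
    linarith

lemma ncard_le_rpow_inv_sub_add_two {s : Set ℕ} {α a b : ℝ} (hα : 0 < α) (ha : 0 ≤ a)
    (hab : a ≤ b) (hs : ∀ u ∈ s, (u : ℝ) ^ α < b ∧ a < ((u : ℝ) + 1) ^ α) :
    (s.ncard : ℝ) ≤ b ^ α⁻¹ - a ^ α⁻¹ + 2 := by
  refine ncard_le_sub_add_two_of_forall_mem (rpow_nonneg ha _)
    (rpow_le_rpow ha hab (inv_nonneg.2 hα.le)) fun u hu => ⟨?_, ?_⟩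
  · exact (rpow_inv_lt_iff_of_pos ha (by positivity) hα).2 (hs u hu).2
  · exact (lt_rpow_inv_iff_of_pos u.cast_nonneg (ha.trans hab) hα).2 (hs u hu).1

lemma sum_rpow_add_one_sub_sum_rpow_le {ι : Type*} (s : Finset ι) {x : ι → ℝ}
    (hx : ∀ r ∈ s, 0 ≤ x r) {p : ℝ} (hp : 1 ≤ p) :
    ∑ r ∈ s, (x r + 1) ^ p - ∑ r ∈ s, x r ^ p ≤ p * ∑ r ∈ s, (x r + 1) ^ (p - 1) := by
  rw [← sum_sub_distrib, mul_sum]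
  gcongr with r hr
  simpa using rpow_sub_rpow_le_mul_of_one_le (hx r hr) (le_add_of_nonneg_right zero_le_one) hp

/-- Bound on the size of the fiber I_{i_1,…,i_{k-1}} when the cube is not too close
to the boundary. -/
theorem stmt8 (α : ℝ) (hα : 1 < α) (k : ℕ) (hk : 2 ≤ k) :
    ∃ C > (0:ℝ), ∀ n : ℝ, ∀ i : Fin (k - 1) → ℕ,
      (∑ r, ((i r : ℝ) + 1) ^ α) < n - n ^ ((α - 1) / α) →
      ((Set.ncard {u : ℕ |
          (∑ r, (i r : ℝ) ^ α) + (u : ℝ) ^ α < n ∧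
          n < (∑ r, ((i r : ℝ) + 1) ^ α) + ((u : ℝ) + 1) ^ α} : ℝ)
        ≤ C * ((∑ r, ((i r : ℝ) + 1) ^ (α - 1))
              / (n - ∑ r, ((i r : ℝ) + 1) ^ α) ^ (1 - 1 / α) + 1)) := by
  refine ⟨2, two_pos, fun n i hn => ?_⟩
  set S := ∑ r, (i r : ℝ) ^ α
  set T := ∑ r, ((i r : ℝ) + 1) ^ α
  set W := ∑ r, ((i r : ℝ) + 1) ^ (α - 1)
  have hα₀ : 0 < α := by linarith
  have hT : 1 ≤ T := (one_le_rpow (by simp) hα₀.le).trans <|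
    single_le_sum (f := fun r => ((i r : ℝ) + 1) ^ α) (fun r _ => by positivity)
      (mem_univ ⟨0, by omega⟩)
  have hTn : T < n := by
    rcases lt_or_ge n 0 with hneg | hnonneg
    · linarith [sub_rpow_lt_one_of_neg hneg (e := (α - 1) / α) (by positivity)
        ((div_le_one hα₀).2 (by linarith))]
    · linarith [rpow_nonneg hnonneg ((α - 1) / α)]
  have hST : S ≤ T :=
    sum_le_sum fun r _ => rpow_le_rpow (i r).cast_nonneg (by linarith) hα₀.le
  have hTS : T - S ≤ α * W :=
    sum_rpow_add_one_sub_sum_rpow_le _ (fun r _ => (i r).cast_nonneg) hα.le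
  have hcount :
      (Set.ncard {u : ℕ | S + (u : ℝ) ^ α < n ∧ n < T + ((u : ℝ) + 1) ^ α} : ℝ)
      ≤ (n - S) ^ α⁻¹ - (n - T) ^ α⁻¹ + 2 :=
    ncard_le_rpow_inv_sub_add_two hα₀ (sub_nonneg.2 hTn.le) (by linarith)
      fun u hu => ⟨by linarith [hu.1], by linarith [hu.2]⟩
  have hconcave := rpow_sub_rpow_le_mul_of_le_one (y := n - S) (sub_pos.2 hTn) (by linarith)
    (inv_nonneg.2 hα₀.le) (inv_le_one_of_one_le₀ hα.le)
  have hpow : (n - T) ^ (α⁻¹ - 1) = ((n - T) ^ (1 - 1 / α))⁻¹ := by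
    rw [← rpow_neg (sub_nonneg.2 hTn.le)]; ring_nf
  calc _ ≤ α⁻¹ * (n - T) ^ (α⁻¹ - 1) * (T - S) + 2 := by linarith
    _ ≤ α⁻¹ * (n - T) ^ (α⁻¹ - 1) * (α * W) + 2 := by gcongr
    _ = W / (n - T) ^ (1 - 1 / α) + 2 := by rw [hpow]; field_simp
    _ ≤ 2 * (W / (n - T) ^ (1 - 1 / α) + 1) := by
      have : 0 ≤ W / (n - T) ^ (1 - 1 / α) := by positivity
      linarith
end
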